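/- arXiv:math/0610400 — 5 statements merged into one kernel-verified Lean document; each statement's English description precedes it below -/
import Mathlib

section
/- Let $F = GF(q) \subseteq E = GF(q^2)$ (so $n = 2$), and let $w \in E^*$ be a primitive element of $E$. Then $\{w, w^q\}$ is a basis of $E$ over $F$, and $\{w^{-1}, w^{-q}\}$ is also a basis of $E$ over $F$. -/
lemma primitive_free_aux (F E : Type*) [Field F] [Field E] [Algebra F E]
    [Fintype F] [Fintype E] (q : ℕ) (hF : Fintype.card F = q) (hE : Fintype.card E = q ^ 2)
    (w : Eˣ) (hw : ∀ x : Eˣ, x ∈ Subgroup.zpowers w) :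
    LinearIndependent F ![(w : E), (w : E) ^ q] ∧
      Submodule.span F (Set.range ![(w : E), (w : E) ^ q]) = ⊤ := by
  classical
  have hq2 : 2 ≤ q := hF ▸ Fintype.one_lt_card
  have hord : orderOf w = q ^ 2 - 1 := by
    rw [orderOf_eq_card_of_forall_mem_zpowers hw, Nat.card_eq_fintype_card,
      Fintype.card_units, hE]
  have hli : LinearIndependent F ![(w : E), (w : E) ^ q] := by
    rw [linearIndependent_fin2]
    refine ⟨pow_ne_zero _ (Units.ne_zero w), fun a ha => ?_⟩
    simp only [Matrix.cons_val_one, Matrix.head_cons, Matrix.cons_val_zero] at ha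
    have ha0 : a ≠ 0 := by
      rintro rfl; simp at ha; exact Units.ne_zero w ha.symm
    have haq : (algebraMap F E a) ^ (q - 1) = 1 := by
      rw [← map_pow, ← hF, FiniteField.pow_card_sub_one_eq_one a ha0, map_one]
    -- ha : a • w^q = w
    have key : (w : E) ^ ((q - 1) * (q - 1)) = 1 := by
      have h1 : ((w : E)) ^ (q - 1) = (algebraMap F E a) ^ (q - 1) * ((w : E) ^ q) ^ (q - 1) := by
        rw [← mul_pow, ← Algebra.smul_def, ha]
      rw [haq, one_mul, ← pow_mul] at h1
      have h2 : q * (q - 1) = (q - 1) * (q - 1) + (q - 1) := by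
        cases q with
        | zero => omega
        | succ n => simp [Nat.succ_sub_one]; ring
      rw [h2, pow_add] at h1
      nth_rewrite 1 [← one_mul ((w : E) ^ (q - 1))] at h1
      exact (mul_right_cancel₀ (pow_ne_zero (q - 1) (Units.ne_zero w)) h1).symm
    have hdvd : orderOf w ∣ (q - 1) * (q - 1) := by
      apply orderOf_dvd_of_pow_eq_one
      ext
      push_cast
      simpa using key
    rw [hord] at hdvd
    have hle := Nat.le_of_dvd (Nat.mul_pos (by omega) (by omega)) hdvd
    obtain ⟨m, rfl⟩ : ∃ m, q = m + 2 := ⟨q - 2, by omega⟩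
    have e1 : (m + 2) ^ 2 = m * m + 4 * m + 4 := by ring
    have e2 : (m + 2 - 1) * (m + 2 - 1) = m * m + 2 * m + 1 := by
      have h : m + 2 - 1 = m + 1 := rfl
      rw [h]; ring
    rw [e1, e2] at hle
    omega
  refine ⟨hli, hli.span_eq_top_of_card_eq_finrank ?_⟩
  have hcard : Fintype.card E = Fintype.card F ^ Module.finrank F E := Module.card_eq_pow_finrank
  rw [hE, hF] at hcard
  have : Module.finrank F E = 2 :=
    (Nat.pow_right_injective hq2 hcard.symm)
  simp [this]

theorem primitive_is_free_deg_two (F E : Type*) [Field F] [Field E] [Algebra F E]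
    [Fintype F] [Fintype E] (q : ℕ) (hF : Fintype.card F = q) (hE : Fintype.card E = q ^ 2)
    (w : Eˣ) (hw : ∀ x : Eˣ, x ∈ Subgroup.zpowers w) :
    (LinearIndependent F ![(w : E), (w : E) ^ q] ∧
      Submodule.span F (Set.range ![(w : E), (w : E) ^ q]) = ⊤) ∧
    (LinearIndependent F ![((w⁻¹ : Eˣ) : E), ((w⁻¹ : Eˣ) : E) ^ q] ∧
      Submodule.span F (Set.range ![((w⁻¹ : Eˣ) : E), ((w⁻¹ : Eˣ) : E) ^ q]) = ⊤) := by
  refine ⟨primitive_free_aux F E q hF hE w hw, primitive_free_aux F E q hF hE w⁻¹ ?_⟩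
  intro x
  obtain ⟨k, hk⟩ := hw x
  exact ⟨-k, by simp [← hk]⟩
end

section
/- For every positive integer $m$, $2^{\omega(m)} < 4.9 \, m^{1/4}$, and if $m$ is odd then $2^{\omega(m)} < 2.9 \, m^{1/4}$. -/
open Finset

lemma aux_prod_le (S T : Finset ℕ) (hS : ∀ p ∈ S, 0 < p)
    (hbig : ∀ p ∈ S, p ∉ T → 16 ≤ p)
    (hT : ∀ p ∈ T, 1 ≤ (16:ℝ)/p) :
    ∏ p ∈ S, (16:ℝ)/p ≤ ∏ p ∈ T, (16:ℝ)/p := by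
  have h1 : ∏ p ∈ S, (16:ℝ)/p ≤ ∏ p ∈ S ∩ T, (16:ℝ)/p := by
    rw [← Finset.prod_inter_mul_prod_diff S T]
    have hle1 : ∏ p ∈ S \ T, (16:ℝ)/p ≤ 1 := by
      apply Finset.prod_le_one
      · intro p hp
        positivity
      · intro p hp
        rw [Finset.mem_sdiff] at hp
        have h16 := hbig p hp.1 hp.2
        have : (16:ℝ) ≤ p := by exact_mod_cast h16
        rw [div_le_one (by linarith)]
        exact this
    have hnn : (0:ℝ) ≤ ∏ p ∈ S ∩ T, (16:ℝ)/p := by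
      apply Finset.prod_nonneg; intro p hp; positivity
    nlinarith
  refine h1.trans ?_
  rw [← Finset.prod_sdiff (Finset.inter_subset_right : S ∩ T ⊆ T)]
  have hge1 : (1:ℝ) ≤ ∏ p ∈ T \ (S ∩ T), (16:ℝ)/p := by
    rw [show (1:ℝ) = ∏ _p ∈ T \ (S ∩ T), (1:ℝ) by simp]
    apply Finset.prod_le_prod
    · intro p hp; norm_num
    · intro p hp; exact hT p (Finset.mem_sdiff.mp hp).1
  have hnn : (0:ℝ) ≤ ∏ p ∈ S ∩ T, (16:ℝ)/p := by
    apply Finset.prod_nonneg; intro p hp; positivity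
  exact le_mul_of_one_le_left hnn hge1

lemma main_aux (m : ℕ) (hm : 0 < m) (T : Finset ℕ) (c B : ℝ)
    (hbig : ∀ p ∈ m.primeFactors, p ∉ T → 16 ≤ p)
    (hT : ∀ p ∈ T, 1 ≤ (16:ℝ)/p)
    (hB : ∏ p ∈ T, (16:ℝ)/p ≤ B)
    (hc : 0 < c) (hBc : B < c^4) :
    (2:ℝ)^m.primeFactors.card < c * (m:ℝ)^((1:ℝ)/4) := by
  set S := m.primeFactors with hSdef
  have hppos : ∀ p ∈ S, (0:ℝ) < p := by
    intro p hp
    exact_mod_cast (Nat.prime_of_mem_primeFactors hp).pos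
  have h16 : (16:ℝ)^S.card = (∏ p ∈ S, (16:ℝ)/p) * ∏ p ∈ S, (p:ℝ) := by
    rw [← Finset.prod_mul_distrib, ← Finset.prod_const]
    exact Finset.prod_congr rfl fun p hp => (div_mul_cancel₀ _ (hppos p hp).ne').symm
  have hprodm : (∏ p ∈ S, (p:ℝ)) ≤ m := by
    have := Nat.le_of_dvd hm (Nat.prod_primeFactors_dvd m)
    rw [hSdef]
    have h : ((∏ p ∈ m.primeFactors, p : ℕ) : ℝ) ≤ m := Nat.cast_le.mpr this
    simpa using h
  have hprodpos : (0:ℝ) < ∏ p ∈ S, (p:ℝ) := Finset.prod_pos hppos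
  have hfle : ∏ p ∈ S, (16:ℝ)/p ≤ B :=
    (aux_prod_le S T (fun p hp => (Nat.prime_of_mem_primeFactors hp).pos) hbig hT).trans hB
  have hfnn : (0:ℝ) ≤ ∏ p ∈ S, (16:ℝ)/p := by
    apply Finset.prod_nonneg; intro p hp; positivity
  have hBnn : (0:ℝ) ≤ B := hfnn.trans hfle
  have hkey : (16:ℝ)^S.card < c^4 * m := by
    have hm1 : (1:ℝ) ≤ m := by exact_mod_cast hm
    have h1 : (16:ℝ)^S.card ≤ B * m := by
      rw [h16]
      exact mul_le_mul hfle hprodm hprodpos.le hBnn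
    have h2 : B * m < c^4 * m := by
      apply mul_lt_mul_of_pos_right hBc (by linarith)
    linarith
  have hx4 : ((m:ℝ)^((1:ℝ)/4))^(4:ℕ) = m := by
    rw [← Real.rpow_natCast ((m:ℝ)^((1:ℝ)/4)) 4, ← Real.rpow_mul (Nat.cast_nonneg m)]
    norm_num
  have hxpos : (0:ℝ) ≤ c * (m:ℝ)^((1:ℝ)/4) := by positivity
  refine lt_of_pow_lt_pow_left₀ 4 hxpos ?_
  rw [mul_pow, hx4]
  calc ((2:ℝ)^S.card)^(4:ℕ) = (16:ℝ)^S.card := by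
        rw [← pow_mul, mul_comm, pow_mul]; norm_num
    _ < c^4 * m := hkey

theorem W_lt_const_mul_rpow (m : ℕ) (hm : 0 < m) :
    (2 : ℝ) ^ m.primeFactors.card < 4.9 * (m : ℝ) ^ ((1 : ℝ) / 4) ∧
      (Odd m → (2 : ℝ) ^ m.primeFactors.card < 2.9 * (m : ℝ) ^ ((1 : ℝ) / 4)) := by
  constructor
  · apply main_aux m hm ({2,3,5,7,11,13} : Finset ℕ) 4.9 (16777216/30030)
    · intro p hp hnot
      have hpp := Nat.prime_of_mem_primeFactors hp
      by_contra hlt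
      push_neg at hlt
      interval_cases p <;> simp_all <;> revert hpp <;> decide
    · intro p hp
      fin_cases hp <;> norm_num
    · norm_num [Finset.prod_insert, Finset.mem_insert, Finset.mem_singleton]
    · norm_num
    · norm_num
  · intro hodd
    have h2 : 2 ∉ m.primeFactors := by
      rw [Nat.mem_primeFactors]
      rintro ⟨-, h, -⟩
      exact (Nat.not_even_iff_odd.mpr hodd) (even_iff_two_dvd.mpr h)
    apply main_aux m hm ({3,5,7,11,13} : Finset ℕ) 2.9 (1048576/15015)
    · intro p hp hnot
      have hpp := Nat.prime_of_mem_primeFactors hp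
      have hne2 : p ≠ 2 := fun h => h2 (h ▸ hp)
      by_contra hlt
      push_neg at hlt
      interval_cases p <;> simp_all <;> revert hpp <;> decide
    · intro p hp
      fin_cases hp <;> norm_num
    · norm_num [Finset.prod_insert, Finset.mem_insert, Finset.mem_singleton]
    · norm_num
    · norm_num
end

section
/- Let $h$ be a positive integer not divisible by $3$ with $\omega(h) \ge 52$. Then $2^{\omega(h)} < h^{4/25}$. -/
/-!
The prime factors of `h` are `ω(h)` distinct primes other than `3`, so their product, which
divides `h`, is at least the product of the first `ω(h)` primes other than `3`. Raising the
claim to the 25th power, it suffices that `2 ^ (25 k)` is below the fourth power of that product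
for `k ≥ 52`.
-/

open Finset

namespace Nat

variable {P : ℕ → Prop} [DecidablePred P]

theorem prod_range_nth_le_prod (S : Finset ℕ) (hS : ∀ p ∈ S, P p) :
    ∏ i ∈ range #S, nth P i ≤ ∏ p ∈ S, p := by
  induction S using Finset.induction_on_max with
  | empty => simp
  | insert a s hlt ih =>
    have ha : a ∉ s := fun has => (hlt a has).false
    have hcount : #s ≤ count P a := by
      rw [count_eq_card_filter_range]
      exact card_le_card fun x hx => mem_filter.2
        ⟨mem_range.2 (hlt x hx), hS x (mem_insert_of_mem hx)⟩
    have hnth : nth P #s < a + 1 :=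
      nth_lt_of_lt_count (by rw [count_succ, if_pos (hS a (mem_insert_self a s))]; omega)
    rw [card_insert_of_notMem ha, prod_range_succ, prod_insert ha, mul_comm]
    exact Nat.mul_le_mul (Nat.lt_succ_iff.1 hnth) (ih fun p hp => hS p (mem_insert_of_mem hp))

theorem prod_range_count_nth (n : ℕ) :
    ∏ i ∈ range (count P n), nth P i = ∏ p ∈ range n with P p, p := by
  induction n with
  | zero => simp
  | succ n ih =>
    rw [range_add_one, filter_insert, count_succ]
    by_cases hn : P n
    · rw [if_pos hn, if_pos hn, prod_range_succ, ih, nth_count hn,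
        prod_insert fun h => (mem_range.1 (mem_filter.1 h).1).false, mul_comm]
    · rw [if_neg hn, if_neg hn, add_zero, ih]

end Nat

theorem Real.pow_lt_rpow_div_of_pow_mul_lt {x y : ℝ} (hy : 0 ≤ y) {k m n : ℕ} (hn : n ≠ 0)
    (h : x ^ (n * k) < y ^ m) : x ^ k < y ^ ((m : ℝ) / n) := by
  refine lt_of_pow_lt_pow_left₀ n (Real.rpow_nonneg hy _) ?_
  rwa [← pow_mul, mul_comm, ← Real.rpow_mul_natCast hy,
    div_mul_cancel₀ _ (Nat.cast_ne_zero.2 hn), Real.rpow_natCast]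

abbrev PrimeNeThree (p : ℕ) : Prop := p.Prime ∧ p ≠ 3

theorem infinite_setOf_primeNeThree : (Set.ofPred PrimeNeThree).Infinite :=
  Nat.infinite_setOfPred_prime.sdiff (Set.finite_singleton 3)

/-- The first `52` primes other than `3` are those below `242`, which settles `k = 52`;
every later one is at least `77 > 2 ^ (25 / 4)`. -/
theorem two_pow_lt_prod_nth_primeNeThree_pow {k : ℕ} (hk : 52 ≤ k) :
    2 ^ (25 * k) < (∏ i ∈ range k, Nat.nth PrimeNeThree i) ^ 4 := by
  induction k, hk using Nat.le_induction with
  | base =>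
    rw [show 52 = Nat.count PrimeNeThree 242 by decide +kernel, Nat.prod_range_count_nth]
    decide +kernel
  | succ k hk ih =>
    have hnth : 77 ≤ Nat.nth PrimeNeThree k := by
      rw [← Nat.count_le_iff_le_nth infinite_setOf_primeNeThree]
      exact le_trans (by decide) hk
    calc 2 ^ (25 * (k + 1)) = 2 ^ (25 * k) * 2 ^ 25 := by ring
      _ < (∏ i ∈ range k, Nat.nth PrimeNeThree i) ^ 4 * Nat.nth PrimeNeThree k ^ 4 :=
        Nat.mul_lt_mul_of_lt_of_lt ih (lt_of_lt_of_le (by norm_num) (Nat.pow_le_pow_left hnth 4))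
      _ = (∏ i ∈ range (k + 1), Nat.nth PrimeNeThree i) ^ 4 := by
        rw [prod_range_succ, mul_pow]

theorem W_lt_rpow_four_twentyfive (h : ℕ) (hpos : 0 < h) (h3 : ¬ 3 ∣ h)
    (hω : 52 ≤ h.primeFactors.card) :
    (2 : ℝ) ^ h.primeFactors.card < (h : ℝ) ^ ((4 : ℝ) / 25) := by
  have hP : ∀ p ∈ h.primeFactors, PrimeNeThree p := fun p hp =>
    ⟨Nat.prime_of_mem_primeFactors hp, fun h3p => h3 (h3p ▸ Nat.dvd_of_mem_primeFactors hp)⟩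
  have hradical : ∏ p ∈ h.primeFactors, p ≤ h := Nat.le_of_dvd hpos (Nat.prod_primeFactors_dvd h)
  have hnat : 2 ^ (25 * h.primeFactors.card) < h ^ 4 :=
    calc 2 ^ (25 * h.primeFactors.card)
        < (∏ i ∈ range h.primeFactors.card, Nat.nth PrimeNeThree i) ^ 4 :=
          two_pow_lt_prod_nth_primeNeThree_pow hω
      _ ≤ h ^ 4 := Nat.pow_le_pow_left ((Nat.prod_range_nth_le_prod _ hP).trans hradical) 4
  simpa using Real.pow_lt_rpow_div_of_pow_mul_lt (x := 2) (m := 4) (n := 25)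
    (Nat.cast_nonneg h) (by norm_num) (by exact_mod_cast hnat)
end

section
/- Let $h$ be an odd positive integer with $\omega(h) \ge 175$. Then $2^{\omega(h)} < h^{3/25}$. -/
/-!
The product of the distinct prime factors of `h` is at most `h`, so it suffices to show that the
cube of the product of any `k ≥ 175` distinct odd primes exceeds `2 ^ (25 * k)`. The 175 odd
primes below `1050` do this by direct computation. Any other set of `k ≥ 175` odd primes is
obtained from them by dropping some of these primes, each at most `1050`, and adding at least as
many odd primes, each at least `1050`; since `2 ^ 25 ≤ 1050 ^ 3`, this exchange can only help.
-/

open Finset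

namespace Finset

variable {ι M : Type*} [CommMonoid M] [PartialOrder M] [IsOrderedMonoid M] [DecidableEq ι]

theorem prod_mul_pow_card_sub_le_prod {s t : Finset ι} {f : ι → M} {c : M} (hcard : #t ≤ #s)
    (ht : ∀ i ∈ t \ s, f i ≤ c) (hs : ∀ i ∈ s \ t, c ≤ f i) :
    (∏ i ∈ t, f i) * c ^ (#s - #t) ≤ ∏ i ∈ s, f i := by
  have hsplit : #(t \ s) + (#s - #t) = #(s \ t) := by
    have := card_sdiff_add_card_inter s t
    have := card_sdiff_add_card_inter t s
    rw [inter_comm] at this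
    omega
  calc (∏ i ∈ t, f i) * c ^ (#s - #t)
      = (∏ i ∈ s ∩ t, f i) * (∏ i ∈ t \ s, f i) * c ^ (#s - #t) := by
        rw [← prod_inter_mul_prod_sdiff t s, inter_comm]
    _ ≤ (∏ i ∈ s ∩ t, f i) * c ^ #(t \ s) * c ^ (#s - #t) := by
        gcongr
        exact prod_le_pow_card _ _ _ ht
    _ = (∏ i ∈ s ∩ t, f i) * c ^ #(s \ t) := by rw [mul_assoc, ← pow_add, hsplit]
    _ ≤ (∏ i ∈ s ∩ t, f i) * ∏ i ∈ s \ t, f i := by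
        gcongr
        exact pow_card_le_prod _ _ _ hs
    _ = ∏ i ∈ s, f i := prod_inter_mul_prod_sdiff s t f

end Finset

theorem Nat.prime_iff_of_lt_mul_self {p b : ℕ} (hpb : p < b * b) :
    p.Prime ↔ 2 ≤ p ∧ ∀ m : ℕ, m < b → 2 ≤ m → m < p → ¬m ∣ p := by
  refine ⟨fun hp => ⟨hp.two_le, fun m _ hm2 hmp hdvd => ?_⟩, fun ⟨hp2, htrial⟩ => ?_⟩
  · rcases hp.eq_one_or_self_of_dvd m hdvd with rfl | rfl <;> omega
  · by_contra hnp
    have hsq : p.minFac * p.minFac ≤ p := by simpa [sq] using Nat.minFac_sq_le_self (by omega) hnp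
    have hmin2 : 2 ≤ p.minFac := (Nat.minFac_prime (by omega)).two_le
    exact htrial p.minFac (Nat.mul_self_lt_mul_self_iff.mp (by omega)) hmin2 (by nlinarith)
      (Nat.minFac_dvd p)

def oddPrimesBelow (n : ℕ) : Finset ℕ := {p ∈ range n | p.Prime ∧ Odd p}

theorem oddPrimesBelow_eq_filter_trialDivision {n b : ℕ} (hnb : n ≤ b * b) :
    oddPrimesBelow n =
      {p ∈ range n | Odd p ∧ 2 ≤ p ∧ ∀ m : ℕ, m < b → 2 ≤ m → m < p → ¬m ∣ p} := by
  refine filter_congr fun p hp => ?_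
  rw [Nat.prime_iff_of_lt_mul_self (b := b) (by rw [mem_range] at hp; omega)]
  tauto

theorem card_oddPrimesBelow_1050 : #(oddPrimesBelow 1050) = 175 := by
  rw [oddPrimesBelow_eq_filter_trialDivision (b := 33) (by norm_num)]
  decide +kernel

theorem two_pow_lt_prod_oddPrimesBelow_1050_pow_three :
    2 ^ (25 * 175) < (∏ p ∈ oddPrimesBelow 1050, p) ^ 3 := by
  rw [oddPrimesBelow_eq_filter_trialDivision (b := 33) (by norm_num)]
  decide +kernel

theorem prod_oddPrimesBelow_mul_pow_le_prod {n : ℕ} {s : Finset ℕ}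
    (hs : ∀ p ∈ s, p.Prime ∧ Odd p) (hcard : #(oddPrimesBelow n) ≤ #s) :
    (∏ p ∈ oddPrimesBelow n, p) * n ^ (#s - #(oddPrimesBelow n)) ≤ ∏ p ∈ s, p := by
  refine prod_mul_pow_card_sub_le_prod hcard (fun q hq => ?_) (fun p hp => ?_)
  · exact (mem_range.mp (mem_filter.mp (mem_sdiff.mp hq).1).1).le
  · obtain ⟨hps, hpn⟩ := mem_sdiff.mp hp
    by_contra! hlt
    exact hpn (mem_filter.mpr ⟨mem_range.mpr hlt, hs p hps⟩)

theorem two_pow_lt_prod_pow_three {s : Finset ℕ} (hs : ∀ p ∈ s, p.Prime ∧ Odd p)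
    (hcard : 175 ≤ #s) : 2 ^ (25 * #s) < (∏ p ∈ s, p) ^ 3 := by
  have hprod := prod_oddPrimesBelow_mul_pow_le_prod (n := 1050) hs
    (by rwa [card_oddPrimesBelow_1050])
  rw [card_oddPrimesBelow_1050] at hprod
  obtain ⟨k, hk⟩ := Nat.exists_eq_add_of_le hcard
  rw [hk, Nat.add_sub_cancel_left] at hprod
  calc 2 ^ (25 * #s) = 2 ^ (25 * 175) * (2 ^ 25) ^ k := by rw [hk, mul_add, pow_add, ← pow_mul]
    _ < (∏ p ∈ oddPrimesBelow 1050, p) ^ 3 * (1050 ^ 3) ^ k :=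
        Nat.mul_lt_mul_of_lt_of_le two_pow_lt_prod_oddPrimesBelow_1050_pow_three
          (Nat.pow_le_pow_left (by norm_num) k) (by positivity)
    _ = ((∏ p ∈ oddPrimesBelow 1050, p) * 1050 ^ k) ^ 3 := by
        rw [mul_pow, ← pow_mul, ← pow_mul, mul_comm k]
    _ ≤ (∏ p ∈ s, p) ^ 3 := Nat.pow_le_pow_left hprod 3

theorem Nat.two_pow_mul_card_primeFactors_lt_pow_three {h : ℕ} (hodd : Odd h)
    (hω : 175 ≤ h.primeFactors.card) : 2 ^ (25 * h.primeFactors.card) < h ^ 3 := by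
  have hodd_primes : ∀ p ∈ h.primeFactors, p.Prime ∧ Odd p := fun p hp =>
    ⟨Nat.prime_of_mem_primeFactors hp, hodd.of_dvd_nat (Nat.dvd_of_mem_primeFactors hp)⟩
  calc 2 ^ (25 * h.primeFactors.card) < (∏ p ∈ h.primeFactors, p) ^ 3 :=
        two_pow_lt_prod_pow_three hodd_primes hω
    _ ≤ h ^ 3 := by
        gcongr
        exact Nat.le_of_dvd hodd.pos (Nat.prod_primeFactors_dvd h)

theorem Real.lt_rpow_natCast_div_iff {x y : ℝ} (hx : 0 ≤ x) (hy : 0 ≤ y) (k : ℕ) {n : ℕ}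
    (hn : n ≠ 0) : x < y ^ ((k : ℝ) / n) ↔ x ^ n < y ^ k := by
  rw [div_eq_mul_inv, Real.rpow_natCast_mul hy,
    Real.lt_rpow_inv_iff_of_pos hx (by positivity) (by positivity), Real.rpow_natCast]

theorem W_lt_rpow_three_twentyfive (h : ℕ) (hodd : Odd h) (hω : 175 ≤ h.primeFactors.card) :
    (2 : ℝ) ^ h.primeFactors.card < (h : ℝ) ^ ((3 : ℝ) / 25) := by
  have key := Nat.two_pow_mul_card_primeFactors_lt_pow_three hodd hω
  have hiff := Real.lt_rpow_natCast_div_iff (x := 2 ^ h.primeFactors.card) (y := h)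
    (by positivity) (by positivity) 3 (n := 25) (by norm_num)
  push_cast at hiff
  rw [hiff, ← pow_mul, mul_comm]
  exact_mod_cast key
end

section
/- Fix integers $n, q, s$ with $2 \le s < n$, $8 \le n < q^s$, and moreover $n < q^2/2$ if $s = 2$. Then the function $\tau(\rho) = 2^{2\rho n} \cdot \dfrac{\frac{2(1-\rho)n}{s} - 1}{1 - \frac{2(1-\rho)n}{s q^s}}$ is strictly increasing in $\rho$ on the interval $0 \le \rho \le 1/3$. -/
set_option maxHeartbeats 1000000

private lemma tau_aux (E Ln N D nn ss Q : ℝ) (hE : 0 < E) (hD : 0 < D)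
    (hnn : 0 < nn) (hss : 0 < ss) (hQ : 1 < Q)
    (hND : D + N / Q = 1 - 1 / Q) (hkey : 1 ≤ Ln * (ss * N * D)) :
    0 < E * (Ln * (2 * nn)) * (N / D) +
      E * ((-(2 * nn / ss) * D - N * (2 * nn / (ss * Q))) / D ^ 2) := by
  have hQ0 : (0:ℝ) < Q := by linarith
  have h1 : (-(2 * nn / ss) * D - N * (2 * nn / (ss * Q)))
      = -(2 * nn / ss) * (D + N / Q) := by
    field_simp
    ring
  rw [h1, hND]
  have h2 : E * (Ln * (2 * nn)) * (N / D) + E * (-(2 * nn / ss) * (1 - 1 / Q) / D ^ 2)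
      = (E * (2 * nn) / (ss * D ^ 2)) * (Ln * (ss * N * D) - (1 - 1 / Q)) := by
    field_simp
    ring
  rw [h2]
  have hfac : 0 < E * (2 * nn) / (ss * D ^ 2) := by positivity
  have h1Q : 0 < 1 / Q := by positivity
  have : 0 < Ln * (ss * N * D) - (1 - 1 / Q) := by linarith
  exact mul_pos hfac this

theorem tau_strict_mono (n q s : ℕ) (hs2 : 2 ≤ s) (hsn : s < n) (hn8 : 8 ≤ n)
    (hnq : n < q ^ s) (hs2' : s = 2 → 2 * n < q ^ 2) :
    StrictMonoOn
      (fun ρ : ℝ => (2 : ℝ) ^ (2 * ρ * n) *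
        ((2 * (1 - ρ) * n / s - 1) / (1 - 2 * (1 - ρ) * n / (s * (q : ℝ) ^ s))))
      (Set.Icc 0 (1 / 3)) := by
  have hsR : (2:ℝ) ≤ (s:ℝ) := by exact_mod_cast hs2
  have hs0 : (0:ℝ) < (s:ℝ) := by linarith
  have hsnR : (s:ℝ) + 1 ≤ (n:ℝ) := by exact_mod_cast hsn
  have hnR : (8:ℝ) ≤ (n:ℝ) := by exact_mod_cast hn8
  have hn0 : (0:ℝ) < (n:ℝ) := by linarith
  have hQR : (n:ℝ) + 1 ≤ (q:ℝ) ^ s := by exact_mod_cast hnq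
  set Q : ℝ := (q:ℝ) ^ s with hQdef
  have hQ0 : (0:ℝ) < Q := by linarith
  have hQ1 : (1:ℝ) < Q := by linarith
  -- core product bound
  have core : ∀ ρ:ℝ, 0 ≤ ρ → ρ ≤ 1/3 →
      3/2 ≤ (2*(1-ρ)*(n:ℝ) - (s:ℝ)) * (1 - 2*(1-ρ)*(n:ℝ)/((s:ℝ)*Q)) := by
    intro ρ h0 h1
    have hB1 : 4*(n:ℝ)/3 ≤ 2*(1-ρ)*(n:ℝ) := by nlinarith
    have hB2 : 2*(1-ρ)*(n:ℝ) ≤ 2*(n:ℝ) := by nlinarith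
    have hN0 : 11/3 ≤ 2*(1-ρ)*(n:ℝ) - (s:ℝ) := by linarith
    rcases eq_or_lt_of_le hs2 with h2 | h3
    · -- s = 2
      have h2' : s = 2 := h2.symm
      have hq2 : 2*n+1 ≤ q^2 := hs2' h2'
      have hQbig : 2*(n:ℝ)+1 ≤ Q := by
        rw [hQdef, h2']; exact_mod_cast hq2
      have hsR2 : (s:ℝ) = 2 := by rw [h2']; norm_num
      have hDlow : (1:ℝ)/2 ≤ 1 - 2*(1-ρ)*(n:ℝ)/((s:ℝ)*Q) := by
        rw [hsR2]
        have hdiv : 2*(1-ρ)*(n:ℝ)/(2*Q) ≤ 1/2 := by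
          rw [div_le_iff₀ (by positivity)]
          nlinarith
        linarith
      have hN2 : 26/3 ≤ 2*(1-ρ)*(n:ℝ) - (s:ℝ) := by rw [hsR2]; linarith
      calc (3/2:ℝ) ≤ (26/3) * (1/2) := by norm_num
        _ ≤ (2*(1-ρ)*(n:ℝ) - (s:ℝ)) * (1 - 2*(1-ρ)*(n:ℝ)/((s:ℝ)*Q)) :=
            mul_le_mul hN2 hDlow (by norm_num) (by linarith)
    · -- 3 ≤ s
      have hs3R : (3:ℝ) ≤ (s:ℝ) := by exact_mod_cast h3
      have hsn1 : (0:ℝ) < (s:ℝ)*((n:ℝ)+1) := by positivity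
      have hDlow : 1 - 2*(n:ℝ)/((s:ℝ)*((n:ℝ)+1)) ≤ 1 - 2*(1-ρ)*(n:ℝ)/((s:ℝ)*Q) := by
        have h1' : 2*(1-ρ)*(n:ℝ)/((s:ℝ)*Q) ≤ 2*(n:ℝ)/((s:ℝ)*((n:ℝ)+1)) := by
          apply div_le_div₀ (by positivity) hB2 hsn1
          exact mul_le_mul_of_nonneg_left hQR hs0.le
        linarith
      have hDlow0 : (0:ℝ) ≤ 1 - 2*(n:ℝ)/((s:ℝ)*((n:ℝ)+1)) := by
        rw [sub_nonneg, div_le_one hsn1]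
        nlinarith
      have key : 9 * ((s:ℝ)*((n:ℝ)+1)) ≤ 2 * (4*(n:ℝ) - 3*(s:ℝ)) * ((s:ℝ)*((n:ℝ)+1) - 2*(n:ℝ)) := by
        nlinarith [mul_nonneg (sub_nonneg.2 hnR) (sub_nonneg.2 hs3R), sq_nonneg ((s:ℝ)-3),
          sq_nonneg ((n:ℝ)-(s:ℝ)-1), mul_nonneg (sub_nonneg.2 hsnR) (sub_nonneg.2 hs3R),
          sq_nonneg ((s:ℝ)-4), mul_nonneg (sub_nonneg.2 hsnR) (sub_nonneg.2 hnR)]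
      have hP : 3/2 ≤ (4*(n:ℝ)/3 - (s:ℝ)) * (1 - 2*(n:ℝ)/((s:ℝ)*((n:ℝ)+1))) := by
        have heq : 1 - 2*(n:ℝ)/((s:ℝ)*((n:ℝ)+1))
            = ((s:ℝ)*((n:ℝ)+1) - 2*(n:ℝ))/((s:ℝ)*((n:ℝ)+1)) := by
          field_simp
        rw [heq, ← mul_div_assoc, le_div_iff₀ hsn1]
        linarith [key]
      calc (3/2:ℝ) ≤ (4*(n:ℝ)/3 - (s:ℝ)) * (1 - 2*(n:ℝ)/((s:ℝ)*((n:ℝ)+1))) := hP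
        _ ≤ (2*(1-ρ)*(n:ℝ) - (s:ℝ)) * (1 - 2*(1-ρ)*(n:ℝ)/((s:ℝ)*Q)) :=
            mul_le_mul (by linarith) hDlow hDlow0 (by linarith)
  -- positivity facts
  have hposes : ∀ ρ:ℝ, 0 ≤ ρ → ρ ≤ 1/3 →
      11/3 ≤ 2*(1-ρ)*(n:ℝ) - (s:ℝ) ∧ 0 < 1 - 2*(1-ρ)*(n:ℝ)/((s:ℝ)*Q) := by
    intro ρ h0 h1
    have hB1 : 4*(n:ℝ)/3 ≤ 2*(1-ρ)*(n:ℝ) := by nlinarith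
    have hN : 11/3 ≤ 2*(1-ρ)*(n:ℝ) - (s:ℝ) := by linarith
    refine ⟨hN, ?_⟩
    nlinarith [core ρ h0 h1, hN]
  -- rewrite rpow as exp
  have hfeq : (fun ρ : ℝ => (2 : ℝ) ^ (2 * ρ * (n:ℝ)) *
        ((2 * (1 - ρ) * (n:ℝ) / (s:ℝ) - 1) / (1 - 2 * (1 - ρ) * (n:ℝ) / ((s:ℝ) * Q))))
      = fun ρ : ℝ => Real.exp (ρ * (Real.log 2 * (2 * (n:ℝ)))) *
        ((2 * (1 - ρ) * (n:ℝ) / (s:ℝ) - 1) / (1 - 2 * (1 - ρ) * (n:ℝ) / ((s:ℝ) * Q))) := by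
    funext ρ
    rw [Real.rpow_def_of_pos (by norm_num : (0:ℝ) < 2)]
    rw [show Real.log 2 * (2*ρ*(n:ℝ)) = ρ * (Real.log 2 * (2*(n:ℝ))) from by ring]
  rw [hfeq]
  apply strictMonoOn_of_deriv_pos (convex_Icc _ _)
  · -- continuity
    apply ContinuousOn.mul
    · exact (Real.continuous_exp.comp (continuous_id.mul continuous_const)).continuousOn
    · apply ContinuousOn.div
      · fun_prop
      · fun_prop
      · exact fun ρ hρ => ne_of_gt (hposes ρ hρ.1 hρ.2).2
  · intro x hx
    rw [interior_Icc] at hx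
    obtain ⟨hx0, hx1⟩ := hx
    obtain ⟨hNx, hDx⟩ := hposes x hx0.le hx1.le
    have hDne : (1 - 2*(1-x)*(n:ℝ)/((s:ℝ)*Q)) ≠ 0 := ne_of_gt hDx
    -- derivative pieces
    have hE : HasDerivAt (fun ρ:ℝ => Real.exp (ρ * (Real.log 2 * (2 * (n:ℝ)))))
        (Real.exp (x * (Real.log 2 * (2 * (n:ℝ)))) * (Real.log 2 * (2 * (n:ℝ)))) x :=
      (hasDerivAt_mul_const _).exp
    have hNd : HasDerivAt (fun ρ:ℝ => 2*(1-ρ)*(n:ℝ)/(s:ℝ) - 1) (-(2*(n:ℝ)/(s:ℝ))) x := by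
      have heq : (fun ρ:ℝ => 2*(1-ρ)*(n:ℝ)/(s:ℝ) - 1)
          = fun ρ:ℝ => ρ * (-(2*(n:ℝ)/(s:ℝ))) + (2*(n:ℝ)/(s:ℝ) - 1) := by
        funext ρ; ring
      rw [heq]
      exact (hasDerivAt_mul_const _).add_const _
    have hDd : HasDerivAt (fun ρ:ℝ => 1 - 2*(1-ρ)*(n:ℝ)/((s:ℝ)*Q)) (2*(n:ℝ)/((s:ℝ)*Q)) x := by
      have heq : (fun ρ:ℝ => 1 - 2*(1-ρ)*(n:ℝ)/((s:ℝ)*Q))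
          = fun ρ:ℝ => ρ * (2*(n:ℝ)/((s:ℝ)*Q)) + (1 - 2*(n:ℝ)/((s:ℝ)*Q)) := by
        funext ρ; ring
      rw [heq]
      exact (hasDerivAt_mul_const _).add_const _
    have hquot := hNd.div hDd hDne
    have hf := hE.mul hquot
    have hderiv : deriv (fun ρ : ℝ => Real.exp (ρ * (Real.log 2 * (2 * (n:ℝ)))) *
        ((2 * (1 - ρ) * (n:ℝ) / (s:ℝ) - 1) / (1 - 2 * (1 - ρ) * (n:ℝ) / ((s:ℝ) * Q)))) x
        = Real.exp (x * (Real.log 2 * (2 * (n:ℝ)))) * (Real.log 2 * (2 * (n:ℝ))) *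
            ((2 * (1 - x) * (n:ℝ) / (s:ℝ) - 1) / (1 - 2 * (1 - x) * (n:ℝ) / ((s:ℝ) * Q))) +
          Real.exp (x * (Real.log 2 * (2 * (n:ℝ)))) *
            ((-(2*(n:ℝ)/(s:ℝ)) * (1 - 2*(1-x)*(n:ℝ)/((s:ℝ)*Q))
              - (2*(1-x)*(n:ℝ)/(s:ℝ) - 1) * (2*(n:ℝ)/((s:ℝ)*Q)))
              / (1 - 2*(1-x)*(n:ℝ)/((s:ℝ)*Q)) ^ 2) := by
      exact hf.deriv
    rw [hderiv]
    -- apply the aux lemma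
    have hkey : 1 ≤ Real.log 2 * ((s:ℝ) * (2*(1-x)*(n:ℝ)/(s:ℝ) - 1) *
        (1 - 2*(1-x)*(n:ℝ)/((s:ℝ)*Q))) := by
      have hsN : (s:ℝ) * (2*(1-x)*(n:ℝ)/(s:ℝ) - 1) = 2*(1-x)*(n:ℝ) - (s:ℝ) := by
        field_simp
      rw [hsN]
      have hl2 : (2/3:ℝ) ≤ Real.log 2 := by
        have := Real.log_two_gt_d9
        norm_num at this ⊢
        linarith
      calc (1:ℝ) = (2/3) * (3/2) := by norm_num
        _ ≤ Real.log 2 * ((2*(1-x)*(n:ℝ) - (s:ℝ)) * (1 - 2*(1-x)*(n:ℝ)/((s:ℝ)*Q))) :=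
            mul_le_mul hl2 (core x hx0.le hx1.le) (by norm_num) (by linarith)
    have hND : (1 - 2*(1-x)*(n:ℝ)/((s:ℝ)*Q)) + (2*(1-x)*(n:ℝ)/(s:ℝ) - 1) / Q
        = 1 - 1/Q := by
      field_simp
      ring
    exact tau_aux _ _ _ _ _ _ _ (Real.exp_pos _) hDx hn0 hs0 hQ1 hND hkey
end
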